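/- arXiv:math/0405108 — 2 statements merged into one kernel-verified Lean document; each statement's English description precedes it below -/
import Mathlib

section
/- In the complex group algebra of the free group on N generators (N ≥ 1), the sum X_1 of all 2N group elements of reduced word length 1 satisfies X_1 · X_1 = X_2 + 2N · e, where X_2 is the sum of all group elements of reduced word length 2 and e is the identity of the algebra. -/
/-- `Xop N n` is the sum, in the complex group algebra of the free group on `N`
generators, of all group elements of reduced word length `n`. -/
noncomputable def Xop (N n : ℕ) : MonoidAlgebra ℂ (FreeGroup (Fin N)) :=
  ∑ᶠ w ∈ {w : FreeGroup (Fin N) | FreeGroup.norm w = n},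
    MonoidAlgebra.of ℂ (FreeGroup (Fin N)) w

/-- The generating operator `G = g₁ + ... + g_N + g₁⁻¹ + ... + g_N⁻¹`. -/
noncomputable def genOp (N : ℕ) : MonoidAlgebra ℂ (FreeGroup (Fin N)) :=
  ∑ i : Fin N, (MonoidAlgebra.of ℂ (FreeGroup (Fin N)) (FreeGroup.of i)
    + MonoidAlgebra.of ℂ (FreeGroup (Fin N)) ((FreeGroup.of i)⁻¹))

/-- The canonical trace `τ`, the coefficient at the identity. -/
noncomputable def tr (N : ℕ) (f : MonoidAlgebra ℂ (FreeGroup (Fin N))) : ℂ := f.coeff 1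

/-!
Every element of norm `n` is `mk L` for exactly one reduced word `L` of length `n`. So `X₁` is
the sum of the `2N` one-letter words `[p]`, and `X₁ * X₁` is the sum of `mk [p, q]` over all
pairs of letters. For each `p` exactly one `q`, the inverse letter, makes `[p, q]` non-reduced,
and then `mk [p, q] = 1`; the other pairs run once through the reduced words of length 2.
-/

namespace FreeGroup

variable {α : Type*} [DecidableEq α]

theorem norm_mk_of_isReduced {L : List (α × Bool)} (h : IsReduced L) :
    norm (mk L) = L.length := by
  rw [norm, toWord_mk, h.reduce_eq]

theorem mk_injOn_isReduced :
    Set.InjOn (mk : List (α × Bool) → FreeGroup α) {L | IsReduced L} := by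
  intro L hL L' hL' h
  rw [← hL.reduce_eq, ← hL'.reduce_eq, ← toWord_mk, ← toWord_mk, h]

theorem setOf_norm_eq (n : ℕ) :
    {w : FreeGroup α | norm w = n} = mk '' {L | IsReduced L ∧ L.length = n} := by
  ext w
  constructor
  · rintro rfl
    exact ⟨w.toWord, ⟨isReduced_toWord, rfl⟩, mk_toWord⟩
  · rintro ⟨L, ⟨hL, rfl⟩, rfl⟩
    exact norm_mk_of_isReduced hL

omit [DecidableEq α] in
theorem isReduced_pair_iff {p q : α × Bool} : IsReduced [p, q] ↔ q ≠ (p.1, !p.2) := by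
  obtain ⟨a, b⟩ := p
  obtain ⟨c, d⟩ := q
  simp only [isReduced_cons_cons, IsReduced.singleton, and_true, ne_eq, Prod.mk.injEq]
  cases b <;> cases d <;> simp [eq_comm]

omit [DecidableEq α] in
theorem mk_pair_inv_eq_one (p : α × Bool) : mk [p, (p.1, !p.2)] = 1 := by
  rw [← List.singleton_append, ← mul_mk]
  exact mul_eq_one_iff_inv_eq.mpr inv_mk

noncomputable def sphereSum (k : Type*) [Semiring k] (α : Type*) [DecidableEq α] (n : ℕ) :
    MonoidAlgebra k (FreeGroup α) :=
  ∑ᶠ w ∈ {w : FreeGroup α | norm w = n}, MonoidAlgebra.of k (FreeGroup α) w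

variable {k : Type*} [Semiring k]

theorem sphereSum_eq_finsum_isReduced (n : ℕ) : sphereSum k α n =
    ∑ᶠ L ∈ {L : List (α × Bool) | IsReduced L ∧ L.length = n},
      MonoidAlgebra.of k (FreeGroup α) (mk L) := by
  rw [sphereSum, setOf_norm_eq, finsum_mem_image (mk_injOn_isReduced.mono fun L hL => hL.1)]

theorem sphereSum_one [Fintype α] :
    sphereSum k α 1 = ∑ p : α × Bool, MonoidAlgebra.of k (FreeGroup α) (mk [p]) := by
  have hwords :
      {L : List (α × Bool) | IsReduced L ∧ L.length = 1} = Set.range fun p => [p] := by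
    ext L
    simp only [Set.mem_ofPred_eq, Set.mem_range, List.length_eq_one_iff, eq_comm (a := L)]
    exact ⟨fun h => h.2, fun ⟨p, hp⟩ => ⟨hp ▸ IsReduced.singleton, p, hp⟩⟩
  rw [sphereSum_eq_finsum_isReduced, hwords, finsum_mem_range List.singleton_injective,
    finsum_eq_sum_of_fintype]

theorem sphereSum_two [Fintype α] : sphereSum k α 2 =
    ∑ p : α × Bool, ∑ q ∈ Finset.univ.erase (p.1, !p.2),
      MonoidAlgebra.of k (FreeGroup α) (mk [p, q]) := by
  have hwords : {L : List (α × Bool) | IsReduced L ∧ L.length = 2} =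
      (fun pq : (α × Bool) × (α × Bool) => [pq.1, pq.2]) ''
        {pq | pq.2 ≠ (pq.1.1, !pq.1.2)} := by
    ext L
    simp only [Set.mem_ofPred_eq, Set.mem_image, List.length_eq_two]
    constructor
    · rintro ⟨hL, p, q, rfl⟩
      exact ⟨(p, q), isReduced_pair_iff.mp hL, rfl⟩
    · rintro ⟨⟨p, q⟩, hpq, rfl⟩
      exact ⟨isReduced_pair_iff.mpr hpq, p, q, rfl⟩
  have hpair : Function.Injective fun pq : (α × Bool) × (α × Bool) => [pq.1, pq.2] := by
    intro pq pq' h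
    simp_all [Prod.ext_iff]
  rw [sphereSum_eq_finsum_isReduced, hwords, finsum_mem_image hpair.injOn,
    ← Finset.coe_filter_univ, finsum_mem_coe_finset, Finset.sum_filter, Fintype.sum_prod_type]
  simp only [← Finset.sum_filter, Finset.filter_ne']

theorem sphereSum_one_mul_self [Fintype α] :
    sphereSum k α 1 * sphereSum k α 1 = sphereSum k α 2 + (2 * Fintype.card α) • 1 := by
  calc sphereSum k α 1 * sphereSum k α 1
      = ∑ p : α × Bool, ∑ q, MonoidAlgebra.of k (FreeGroup α) (mk [p, q]) := by
        simp only [sphereSum_one, Finset.sum_mul_sum, mul_mk, List.singleton_append,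
          ← (MonoidAlgebra.of k (FreeGroup α)).map_mul]
    _ = ∑ p : α × Bool,
          (1 + ∑ q ∈ Finset.univ.erase (p.1, !p.2),
            MonoidAlgebra.of k (FreeGroup α) (mk [p, q])) := by
        refine Finset.sum_congr rfl fun p _ => ?_
        rw [← Finset.add_sum_erase _ _ (Finset.mem_univ (p.1, !p.2)), mk_pair_inv_eq_one,
          (MonoidAlgebra.of k (FreeGroup α)).map_one]
    _ = sphereSum k α 2 + (2 * Fintype.card α) • 1 := by
        rw [Finset.sum_add_distrib, sphereSum_two, Finset.sum_const, Finset.card_univ,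
          Fintype.card_prod, Fintype.card_bool, add_comm, mul_comm]

end FreeGroup

theorem Xop_eq_sphereSum (N n : ℕ) : Xop N n = FreeGroup.sphereSum ℂ (Fin N) n := rfl

theorem X1_mul_X1_general (N : ℕ) :
    Xop N 1 * Xop N 1 =
      Xop N 2 + (2 * (N : ℂ)) • (1 : MonoidAlgebra ℂ (FreeGroup (Fin N))) := by
  have h := FreeGroup.sphereSum_one_mul_self (k := ℂ) (α := Fin N)
  rw [Fintype.card_fin, ← Nat.cast_smul_eq_nsmul ℂ, Nat.cast_mul, Nat.cast_ofNat] at h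
  simpa only [Xop_eq_sphereSum] using h

theorem X1_mul_X1 (N : ℕ) (hN : 1 ≤ N) :
    Xop N 1 * Xop N 1 =
      Xop N 2 + (2 * (N : ℂ)) • (1 : MonoidAlgebra ℂ (FreeGroup (Fin N))) :=
  X1_mul_X1_general N
end

section
/- Let G = X_1 be the generating operator of the complex group algebra of the free group on N generators (N ≥ 1). Define coefficients c : ℕ → ℕ → ℂ by c 0 0 = 1, c 0 j = 0 for j ≥ 1, c (n+1) 0 = 2N · c n 1, and c (n+1) j = c n (j−1) + (2N − 1) · c n (j+1) for j ≥ 1. Then for every n ≥ 0, G^n = Σ_{j=0}^{n} c n j · X_j, where X_j is the sum of all group elements of reduced word length j (X_0 = e). -/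
/-!
The coefficient of `G ^ n` at `w` counts the walks of length `n` from `1` to `w` in the Cayley
graph of the free group, a `2N`-regular tree. By induction on `n` it equals `c n |w|`: the
identity has `2N` neighbours, all of length `1`, while a word `w ≠ 1` has exactly one neighbour
of length `|w| - 1` (cancel its first letter) and `2N - 1` neighbours of length `|w| + 1`.
-/

open FreeGroup MonoidAlgebra

theorem Fintype.sum_ite_eq_add_card_sub_one_mul {ι R : Type*} [Fintype ι] [DecidableEq ι]
    [Ring R] (q : ι) (a b : R) :
    ∑ p : ι, (if p = q then a else b) = a + (Fintype.card ι - 1 : R) * b := by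
  have hcompl : ∑ p ∈ {q}ᶜ, (if p = q then a else b) = ∑ p ∈ {q}ᶜ, b :=
    Finset.sum_congr rfl fun p hp => if_neg (by simpa using hp)
  rw [Fintype.sum_eq_add_sum_compl q, if_pos rfl, hcompl, Finset.sum_const, Finset.card_compl,
    Finset.card_singleton, nsmul_eq_mul, Nat.cast_sub (Fintype.card_pos_iff.mpr ⟨q⟩),
    Nat.cast_one]

namespace FreeGroup

variable {α : Type*} [DecidableEq α]

@[simp]
theorem norm_mk_singleton (p : α × Bool) : norm (mk [p]) = 1 := rfl

theorem one_le_norm {w : FreeGroup α} (hw : w ≠ 1) : 1 ≤ norm w :=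
  Nat.one_le_iff_ne_zero.mpr (norm_eq_zero.not.mpr hw)

theorem sphere_finite [Finite α] (n : ℕ) : {w : FreeGroup α | norm w = n}.Finite :=
  (List.finite_length_eq _ n).preimage toWord_injective.injOn

theorem norm_mk_singleton_mul_of_toWord_eq_cons (p x : α × Bool) {tl : List (α × Bool)}
    {w : FreeGroup α} (hw : w.toWord = x :: tl) :
    norm (mk [p] * w) = if p = (x.1, !x.2) then norm w - 1 else norm w + 1 := by
  have hlen : norm w = tl.length + 1 := by simp [norm, hw]
  rw [hlen, ← mk_toWord (x := w), mul_mk, norm, toWord_mk, List.singleton_append, reduce.cons,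
    reduce_toWord, hw]
  obtain ⟨a, b⟩ := p
  obtain ⟨c, d⟩ := x
  by_cases h : a = c ∧ b = !d
  · obtain ⟨rfl, rfl⟩ := h
    simp
  · rw [if_neg]
    · simp [h]
    · rintro ⟨⟩
      simp at h

theorem sum_letters_norm_mk_mul {R : Type*} [Fintype α] [CommRing R] (φ : ℕ → R)
    {w : FreeGroup α} (hw : w ≠ 1) :
    ∑ p : α × Bool, φ (norm (mk [p] * w)) =
      φ (norm w - 1) + (2 * Fintype.card α - 1) * φ (norm w + 1) := by
  obtain ⟨x, tl, hx⟩ := List.exists_cons_of_ne_nil (mt toWord_eq_nil_iff.mp hw)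
  simp only [norm_mk_singleton_mul_of_toWord_eq_cons _ x hx, apply_ite φ]
  rw [Fintype.sum_ite_eq_add_card_sub_one_mul, Fintype.card_prod, Fintype.card_bool]
  push_cast
  ring

end FreeGroup

theorem genOp_eq_sum_letters (N : ℕ) :
    genOp N = ∑ p : Fin N × Bool, of ℂ _ (mk [p]) := by
  simp [genOp, Fintype.sum_prod_type, FreeGroup.of, inv_mk, invRev, add_comm]

theorem coeff_genOp_mul {N : ℕ} (f : MonoidAlgebra ℂ (FreeGroup (Fin N)))
    (w : FreeGroup (Fin N)) :
    (genOp N * f).coeff w = ∑ p : Fin N × Bool, f.coeff (mk [p] * w) := by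
  rw [genOp_eq_sum_letters, Finset.sum_mul, coeff_sum, Finset.sum_apply']
  simp only [of_apply, coeff_single_mul_apply, one_mul, inv_mk, invRev]
  exact (Equiv.prodCongr (Equiv.refl _) Equiv.boolNot).sum_comp (fun p => f.coeff (mk [p] * w))

theorem coeff_Xop (N n : ℕ) (w : FreeGroup (Fin N)) :
    (Xop N n).coeff w = if norm w = n then 1 else 0 := by
  rw [Xop, finsum_mem_eq_finite_toFinset_sum _ (sphere_finite n)]
  simp [coeff_sum, Finsupp.single_apply]

section Recursion

variable {N : ℕ} {c : ℕ → ℕ → ℂ}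

theorem eq_zero_of_lt_of_rec (h0j : ∀ j, 1 ≤ j → c 0 j = 0)
    (hrec : ∀ n j, 1 ≤ j → c (n + 1) j = c n (j - 1) + (2 * (N : ℂ) - 1) * c n (j + 1)) :
    ∀ n j, n < j → c n j = 0 := by
  intro n
  induction n with
  | zero => exact h0j
  | succ n ih =>
    intro j hj
    rw [hrec n j (by omega), ih (j - 1) (by omega), ih (j + 1) (by omega)]
    ring

theorem coeff_genOp_pow (h00 : c 0 0 = 1) (h0j : ∀ j, 1 ≤ j → c 0 j = 0)
    (hrec0 : ∀ n, c (n + 1) 0 = 2 * (N : ℂ) * c n 1)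
    (hrec : ∀ n j, 1 ≤ j → c (n + 1) j = c n (j - 1) + (2 * (N : ℂ) - 1) * c n (j + 1))
    (n : ℕ) (w : FreeGroup (Fin N)) :
    (genOp N ^ n).coeff w = c n (norm w) := by
  induction n generalizing w with
  | zero =>
    rw [pow_zero, one_def, coeff_single, Finsupp.single_apply]
    by_cases hw : w = 1
    · simp [hw, h00]
    · rw [if_neg (Ne.symm hw), h0j _ (one_le_norm hw)]
  | succ n ih =>
    rw [pow_succ', coeff_genOp_mul]
    simp only [ih]
    by_cases hw : w = 1
    · subst hw
      simp [hrec0, mul_comm]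
    · rw [sum_letters_norm_mk_mul _ hw, Fintype.card_fin, hrec n _ (one_le_norm hw)]

end Recursion

theorem genOp_pow_eq_sum_general (N : ℕ) (c : ℕ → ℕ → ℂ)
    (h00 : c 0 0 = 1)
    (h0j : ∀ j, 1 ≤ j → c 0 j = 0)
    (hrec0 : ∀ n, c (n + 1) 0 = 2 * (N : ℂ) * c n 1)
    (hrec : ∀ n j, 1 ≤ j → c (n + 1) j = c n (j - 1) + (2 * (N : ℂ) - 1) * c n (j + 1)) :
    ∀ n : ℕ, genOp N ^ n = ∑ j ∈ Finset.range (n + 1), c n j • Xop N j := by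
  intro n
  ext w
  rw [coeff_genOp_pow h00 h0j hrec0 hrec, coeff_sum, Finset.sum_apply']
  simp only [coeff_smul_apply, coeff_Xop, smul_eq_mul, mul_ite, mul_one, mul_zero]
  rw [Finset.sum_ite_eq]
  split_ifs with hw
  · rfl
  · exact eq_zero_of_lt_of_rec h0j hrec n _ (by simpa using hw)

theorem genOp_pow_eq_sum (N : ℕ) (hN : 1 ≤ N) (c : ℕ → ℕ → ℂ)
    (h00 : c 0 0 = 1)
    (h0j : ∀ j, 1 ≤ j → c 0 j = 0)
    (hrec0 : ∀ n, c (n + 1) 0 = 2 * (N : ℂ) * c n 1)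
    (hrec : ∀ n j, 1 ≤ j → c (n + 1) j = c n (j - 1) + (2 * (N : ℂ) - 1) * c n (j + 1)) :
    ∀ n : ℕ, genOp N ^ n = ∑ j ∈ Finset.range (n + 1), c n j • Xop N j :=
  genOp_pow_eq_sum_general N c h00 h0j hrec0 hrec
end
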